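/- Let X be a uniformly smooth Banach space with ρ(u) ≤ γu^q, 1 < q ≤ 2, and let D be a symmetric dictionary. Then for any target f ∈ A_1(D), the Weak Chebyshev Greedy Algorithm with constant weakness parameter t ∈ (0,1] produces remainders f_m = f − G_m (G_m the best approximation to f from span{φ_1,…,φ_m}, where φ_k is chosen so that F_{f_{k-1}}(φ_k) ≥ t‖F_{f_{k-1}}‖_D) satisfying ‖f_m‖ ≤ 4(2γ)^{1/q}(1 + m t^p)^{−1/p} with p = q/(q−1). -/

import Mathlib

/-- The modulus of smoothness of a real normed space. -/
noncomputable def modulusOfSmoothness (X : Type*) [NormedAddCommGroup X] [NormedSpace ℝ X]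
    (u : ℝ) : ℝ :=
  sSup { r : ℝ | ∃ x y : X, ‖x‖ = 1 ∧ ‖y‖ = 1 ∧ r = (‖x + u • y‖ + ‖x - u • y‖) / 2 - 1 }

/-- `X` is uniformly smooth: `ρ(u)/u → 0` as `u → 0⁺`. -/
def UniformlySmooth (X : Type*) [NormedAddCommGroup X] [NormedSpace ℝ X] : Prop :=
  Filter.Tendsto (fun u : ℝ => modulusOfSmoothness X u / u)
    (nhdsWithin 0 (Set.Ioi 0)) (nhds 0)

lemma modSet_bddAbove (X : Type*) [NormedAddCommGroup X] [NormedSpace ℝ X] {u : ℝ}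
    (hu : 0 ≤ u) :
    BddAbove { r : ℝ | ∃ x y : X, ‖x‖ = 1 ∧ ‖y‖ = 1 ∧ r = (‖x + u • y‖ + ‖x - u • y‖) / 2 - 1 } := by
  refine ⟨u, fun r hr => ?_⟩
  obtain ⟨x, y, hx, hy, rfl⟩ := hr
  have h1 : ‖x + u • y‖ ≤ 1 + u := by
    calc ‖x + u • y‖ ≤ ‖x‖ + ‖u • y‖ := norm_add_le _ _
    _ = 1 + u := by rw [hx, norm_smul, hy, Real.norm_eq_abs, abs_of_nonneg hu, mul_one]
  have h2 : ‖x - u • y‖ ≤ 1 + u := by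
    calc ‖x - u • y‖ ≤ ‖x‖ + ‖u • y‖ := norm_sub_le _ _
    _ = 1 + u := by rw [hx, norm_smul, hy, Real.norm_eq_abs, abs_of_nonneg hu, mul_one]
  linarith

lemma le_modulusOfSmoothness {X : Type*} [NormedAddCommGroup X] [NormedSpace ℝ X] {u : ℝ}
    (hu : 0 ≤ u) {x y : X} (hx : ‖x‖ = 1) (hy : ‖y‖ = 1) :
    (‖x + u • y‖ + ‖x - u • y‖) / 2 - 1 ≤ modulusOfSmoothness X u := by
  unfold modulusOfSmoothness
  exact le_csSup (modSet_bddAbove X hu) ⟨x, y, hx, hy, rfl⟩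

lemma pair_ineq {X : Type*} [NormedAddCommGroup X] [NormedSpace ℝ X]
    (γ q : ℝ) (hγ : 0 < γ) (hq : 1 < q)
    (hrho : ∀ u : ℝ, 0 ≤ u → modulusOfSmoothness X u ≤ γ * u ^ q)
    (x y : X) (hx : x ≠ 0) :
    ‖x + y‖ + ‖x - y‖ ≤ 2 * ‖x‖ * (1 + γ * (‖y‖ / ‖x‖) ^ q) := by
  have hxn : 0 < ‖x‖ := norm_pos_iff.2 hx
  by_cases hy : y = 0
  · subst hy
    simp only [norm_zero, add_zero, sub_zero, zero_div]
    rw [Real.zero_rpow (by linarith : q ≠ 0)]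
    nlinarith
  · have hyn : 0 < ‖y‖ := norm_pos_iff.2 hy
    set u := ‖y‖ / ‖x‖ with hu
    have hu0 : 0 < u := div_pos hyn hxn
    set x1 := ‖x‖⁻¹ • x with hx1d
    set y1 := ‖y‖⁻¹ • y with hy1d
    have hx1 : ‖x1‖ = 1 := by
      rw [hx1d, norm_smul, Real.norm_eq_abs, abs_of_pos (inv_pos.2 hxn), inv_mul_cancel₀ hxn.ne']
    have hy1 : ‖y1‖ = 1 := by
      rw [hy1d, norm_smul, Real.norm_eq_abs, abs_of_pos (inv_pos.2 hyn), inv_mul_cancel₀ hyn.ne']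
    have key1 : x + y = ‖x‖ • (x1 + u • y1) := by
      rw [hx1d, hy1d, hu]
      match_scalars <;> field_simp
    have key2 : x - y = ‖x‖ • (x1 - u • y1) := by
      rw [hx1d, hy1d, hu]
      match_scalars <;> field_simp
    have e1 : ‖x + y‖ = ‖x‖ * ‖x1 + u • y1‖ := by
      rw [key1, norm_smul, Real.norm_eq_abs, abs_of_pos hxn]
    have e2 : ‖x - y‖ = ‖x‖ * ‖x1 - u • y1‖ := by
      rw [key2, norm_smul, Real.norm_eq_abs, abs_of_pos hxn]
    have hmem := le_modulusOfSmoothness hu0.le hx1 hy1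
    have hρ := hrho u hu0.le
    rw [e1, e2]
    nlinarith

lemma bern_aux {p x : ℝ} (hp : 1 ≤ p) (hx0 : 0 ≤ x) (hx1 : x ≤ 1) :
    (1 - x) ^ p * (1 + p * x) ≤ 1 := by
  rcases eq_or_lt_of_le hx1 with rfl | hx1'
  · rw [sub_self, Real.zero_rpow (by linarith : p ≠ 0), zero_mul]
    norm_num
  · have h1x : 0 < 1 - x := by linarith
    set s := x / (1 - x) with hs
    have hs0 : 0 ≤ s := div_nonneg hx0 h1x.le
    have hxs : x ≤ s := by
      rw [hs, le_div_iff₀ h1x]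
      nlinarith
    have hb : 1 + p * s ≤ (1 + s) ^ p := one_add_mul_self_le_rpow_one_add (by linarith) hp
    have hprod : (1 - x) * (1 + s) = 1 := by
      rw [hs]; field_simp; ring
    have hmul : (1 - x) ^ p * (1 + s) ^ p = 1 := by
      rw [← Real.mul_rpow h1x.le (by linarith : (0:ℝ) ≤ 1 + s), hprod, Real.one_rpow]
    have hBn : (0:ℝ) ≤ (1 - x) ^ p := Real.rpow_nonneg h1x.le p
    calc (1 - x) ^ p * (1 + p * x) ≤ (1 - x) ^ p * (1 + p * s) :=
          mul_le_mul_of_nonneg_left (by nlinarith) hBn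
    _ ≤ (1 - x) ^ p * (1 + s) ^ p := mul_le_mul_of_nonneg_left hb hBn
    _ = 1 := hmul


set_option maxHeartbeats 1000000

/-- rate of convergence of the WCGA with constant weakness parameter t for a
target f ∈ A₁(D): ‖f_m‖ ≤ 4(2γ)^{1/q} (1 + m tᵖ)^{-1/p}. -/
theorem stmt_17 {X : Type*} [NormedAddCommGroup X] [NormedSpace ℝ X] [CompleteSpace X]
    (hsm : UniformlySmooth X)
    (γ q p : ℝ) (hγ : 0 < γ) (hq : 1 < q) (hq2 : q ≤ 2) (hp : p = q / (q - 1))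
    (hrho : ∀ u : ℝ, 0 ≤ u → modulusOfSmoothness X u ≤ γ * u ^ q)
    (D : Set X) (hsymmD : ∀ g ∈ D, -g ∈ D) (hnormD : ∀ g ∈ D, ‖g‖ ≤ 1)
    (hdense : (Submodule.span ℝ D).topologicalClosure = ⊤)
    (t : ℝ) (ht : t ∈ Set.Ioc (0:ℝ) 1)
    (f : X) (hf : f ∈ closure (convexHull ℝ D))
    (φ : ℕ → X) (G : ℕ → X) (hG0 : G 0 = 0)
    (F : ℕ → X →L[ℝ] ℝ)
    (hFnorm : ∀ m : ℕ, ‖F m‖ = 1 ∧ F m (f - G m) = ‖f - G m‖)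
    (hgreedy : ∀ m : ℕ, 1 ≤ m → φ m ∈ D ∧
      F (m - 1) (φ m) ≥ t * sSup ((F (m - 1)) '' D))
    (hbest : ∀ m : ℕ, 1 ≤ m →
      G m ∈ Submodule.span ℝ (φ '' Set.Icc 1 m) ∧
      ∀ h ∈ Submodule.span ℝ (φ '' Set.Icc 1 m), ‖f - G m‖ ≤ ‖f - h‖) :
    ∀ m : ℕ, ‖f - G m‖ ≤ 4 * (2 * γ) ^ (1 / q) * (1 + (m : ℝ) * t ^ p) ^ (-(1 / p)) := by
  obtain ⟨ht0, ht1⟩ := ht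
  have hq0 : (0:ℝ) < q := by linarith
  have hq1 : (0:ℝ) < q - 1 := by linarith
  have hp1 : 1 < p := by rw [hp, lt_div_iff₀ hq1]; linarith
  have hp0 : (0:ℝ) < p := by linarith
  have hpq : (p - 1) * q = p := by rw [hp]; field_simp; ring
  have h2γ : (0:ℝ) < 2 * γ := by linarith
  -- X is nontrivial
  have hnt : Nontrivial X := by
    by_contra h
    have hss : Subsingleton X := not_nontrivial_iff_subsingleton.mp h
    have hz : (F 0 : X →L[ℝ] ℝ) = 0 := by
      ext x; rw [Subsingleton.elim x 0]; simp
    have := (hFnorm 0).1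
    rw [hz] at this
    simp at this
  obtain ⟨e, he⟩ := exists_norm_eq X (zero_le_one)
  -- γ * 2^q ≥ 1
  have hγ2 : (1:ℝ) ≤ γ * 2 ^ q := by
    have h3 : ‖e + (2:ℝ) • e‖ = 3 := by
      have h : e + (2:ℝ) • e = (3:ℝ) • e := by module
      rw [h, norm_smul, he, Real.norm_eq_abs]; norm_num
    have h1 : ‖e - (2:ℝ) • e‖ = 1 := by
      have h : e - (2:ℝ) • e = (-1:ℝ) • e := by module
      rw [h, norm_smul, he, Real.norm_eq_abs]; norm_num
    have hle := le_modulusOfSmoothness (by norm_num : (0:ℝ) ≤ 2) he he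
    rw [h3, h1] at hle
    norm_num at hle
    linarith [hrho 2 (by norm_num)]
  -- A ≥ 1
  set A := 4 * (2 * γ) ^ (1 / q) with hA
  have hA1 : (1:ℝ) ≤ A := by
    have h2q : (0:ℝ) < 2 ^ q := Real.rpow_pos_of_pos two_pos q
    have hγ' : (2:ℝ) ^ (-q) ≤ γ := by
      calc (2:ℝ) ^ (-q) = 1 * (2 ^ q)⁻¹ := by rw [Real.rpow_neg two_pos.le, one_mul]
      _ ≤ (γ * 2 ^ q) * (2 ^ q)⁻¹ := mul_le_mul_of_nonneg_right hγ2 (inv_nonneg.2 h2q.le)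
      _ = γ := by field_simp
    have e1 : (2:ℝ) ^ (1 - q) ≤ 2 * γ := by
      have : (2:ℝ) ^ (1 - q) = 2 * 2 ^ (-q) := by
        rw [show (1:ℝ) - q = 1 + (-q) by ring, Real.rpow_add two_pos, Real.rpow_one]
      rw [this]; linarith
    have e2 : ((2:ℝ) ^ (1 - q)) ^ (1 / q) ≤ (2 * γ) ^ (1 / q) :=
      Real.rpow_le_rpow (Real.rpow_nonneg two_pos.le _) e1 (by positivity)
    have e3 : ((2:ℝ) ^ (1 - q)) ^ (1 / q) = 2 ^ ((1 - q) / q) := by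
      rw [← Real.rpow_mul two_pos.le, mul_one_div]
    have e4 : (2:ℝ) ^ (-(1/2) : ℝ) ≤ 2 ^ ((1 - q) / q) := by
      apply Real.rpow_le_rpow_of_exponent_le one_le_two
      rw [le_div_iff₀ hq0]; nlinarith
    have e5 : (1/4 : ℝ) ≤ (2:ℝ) ^ (-(1/2) : ℝ) := by
      have h24 : (2:ℝ) ^ (-(2:ℝ)) ≤ 2 ^ (-(1/2) : ℝ) :=
        Real.rpow_le_rpow_of_exponent_le one_le_two (by norm_num)
      have h4 : (2:ℝ) ^ (-(2:ℝ)) = 1/4 := by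
        rw [Real.rpow_neg two_pos.le, show (2:ℝ) = ((2:ℕ):ℝ) by norm_num, Real.rpow_natCast]
        norm_num
      linarith
    have : (1/4 : ℝ) ≤ (2 * γ) ^ (1 / q) := by
      rw [e3] at e2; linarith
    rw [hA]; linarith
  have hA0 : (0:ℝ) < A := lt_of_lt_of_le one_pos hA1
  -- ‖f‖ ≤ 1
  have hf1 : ‖f‖ ≤ 1 := by
    have hD1 : D ⊆ Metric.closedBall (0:X) 1 := fun g hg => by
      simpa [mem_closedBall_zero_iff] using hnormD g hg
    have hsub : closure (convexHull ℝ D) ⊆ Metric.closedBall (0:X) 1 :=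
      closure_minimal (convexHull_min hD1 (convex_closedBall _ _)) Metric.isClosed_closedBall
    simpa [mem_closedBall_zero_iff] using hsub hf
  -- F m bound
  have hFle : ∀ (m : ℕ) (x : X), F m x ≤ ‖x‖ := by
    intro m x
    have h := (F m).le_opNorm x
    rw [(hFnorm m).1, one_mul] at h
    exact le_trans (le_abs_self _) (by rwa [Real.norm_eq_abs] at h)
  -- minimality for all m
  have hmin : ∀ m : ℕ, ∀ h ∈ Submodule.span ℝ (φ '' Set.Icc 1 m), ‖f - G m‖ ≤ ‖f - h‖ := by
    intro m h hh
    rcases Nat.eq_zero_or_pos m with rfl | hm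
    · have hem : φ '' Set.Icc 1 0 = ∅ := by
        rw [Set.Icc_eq_empty (by norm_num : ¬ (1:ℕ) ≤ 0), Set.image_empty]
      rw [hem, Submodule.span_empty, Submodule.mem_bot] at hh
      rw [hh, hG0]
    · exact (hbest m hm).2 h hh
  have hGmem : ∀ m : ℕ, G m ∈ Submodule.span ℝ (φ '' Set.Icc 1 m) := by
    intro m
    rcases Nat.eq_zero_or_pos m with rfl | hm
    · rw [hG0]; exact Submodule.zero_mem _
    · exact (hbest m hm).1
  have hspanmono : ∀ m : ℕ, Submodule.span ℝ (φ '' Set.Icc 1 m) ≤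
      Submodule.span ℝ (φ '' Set.Icc 1 (m+1)) := fun m =>
    Submodule.span_mono (Set.image_mono (Set.Icc_subset_Icc_right (by omega)))
  have hmono : ∀ m : ℕ, ‖f - G (m+1)‖ ≤ ‖f - G m‖ := fun m =>
    hmin (m+1) (G m) (hspanmono m (hGmem m))
  -- annihilation
  have half : ∀ m : ℕ, f - G m ≠ 0 →
      ∀ h ∈ Submodule.span ℝ (φ '' Set.Icc 1 m), F m h ≤ 0 := by
    intro m hm h hh
    by_cases h0 : h = 0
    · simp [h0]
    have ha : 0 < ‖f - G m‖ := norm_pos_iff.2 hm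
    have hhn : 0 < ‖h‖ := norm_pos_iff.2 h0
    set C := 2 * ‖f - G m‖ * γ * (‖h‖ / ‖f - G m‖) ^ q with hC
    have key : ∀ l : ℝ, 0 < l → F m h ≤ C * l ^ (q - 1) := by
      intro l hl
      have pair := pair_ineq γ q hγ hq hrho (f - G m) (l • h) hm
      have hln : ‖l • h‖ = l * ‖h‖ := by
        rw [norm_smul, Real.norm_eq_abs, abs_of_pos hl]
      have hmin' : ‖f - G m‖ ≤ ‖(f - G m) - l • h‖ := by
        have hmem : G m + l • h ∈ Submodule.span ℝ (φ '' Set.Icc 1 m) :=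
          add_mem (hGmem m) (Submodule.smul_mem _ _ hh)
        have h2 := hmin m (G m + l • h) hmem
        have heq : f - (G m + l • h) = (f - G m) - l • h := by abel
        rwa [heq] at h2
      have hlow : ‖f - G m‖ + l * F m h ≤ ‖(f - G m) + l • h‖ := by
        have h1 := hFle m ((f - G m) + l • h)
        rw [map_add, map_smul, smul_eq_mul, (hFnorm m).2] at h1
        linarith
      have main : l * F m h ≤ 2 * ‖f - G m‖ * γ * ((l * ‖h‖) / ‖f - G m‖) ^ q := by
        rw [hln] at pair
        nlinarith
      have e : ((l * ‖h‖) / ‖f - G m‖) ^ q = l ^ (q - 1) * l * ((‖h‖ / ‖f - G m‖) ^ q) := by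
        rw [mul_div_assoc, Real.mul_rpow hl.le (by positivity)]
        have : l ^ q = l ^ (q - 1) * l := by
          rw [← Real.rpow_add_one hl.ne' (q - 1)]; norm_num
        rw [this]
      rw [e] at main
      have h2 : F m h * l ≤ (C * l ^ (q - 1)) * l := by rw [hC]; nlinarith
      exact le_of_mul_le_mul_right h2 hl
    have htend : Filter.Tendsto (fun l : ℝ => C * l ^ (q - 1))
        (nhdsWithin 0 (Set.Ioi 0)) (nhds 0) := by
      have h1 : Filter.Tendsto (fun l : ℝ => l ^ (q - 1)) (nhds 0) (nhds 0) := by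
        have hc := (Real.continuousAt_rpow_const 0 (q - 1) (Or.inr (by linarith))).tendsto
        simpa [Real.zero_rpow (by linarith : q - 1 ≠ 0)] using hc
      have h2 := (h1.const_mul C).mono_left
        (nhdsWithin_le_nhds (a := (0:ℝ)) (s := Set.Ioi 0))
      simpa using h2
    exact ge_of_tendsto htend (eventually_nhdsWithin_of_forall fun l hl => key l hl)
  have hann : ∀ m : ℕ, f - G m ≠ 0 →
      ∀ h ∈ Submodule.span ℝ (φ '' Set.Icc 1 m), F m h = 0 := by
    intro m hm h hh
    have h1 := half m hm h hh
    have h2 := half m hm (-h) (neg_mem hh)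
    rw [map_neg] at h2
    linarith
  -- sup inequality
  have hsup : ∀ m : ℕ, f - G m ≠ 0 → ‖f - G m‖ ≤ sSup ((F m) '' D) := by
    intro m hm
    have hbd : BddAbove ((F m) '' D) := by
      refine ⟨1, ?_⟩
      rintro r ⟨g, hg, rfl⟩
      exact le_trans (hFle m g) (hnormD g hg)
    have hlin : IsLinearMap ℝ (F m) := ⟨map_add (F m), map_smul (F m)⟩
    have hsub : closure (convexHull ℝ D) ⊆ {x | F m x ≤ sSup ((F m) '' D)} :=
      closure_minimal
        (convexHull_min (fun g hg => le_csSup hbd ⟨g, hg, rfl⟩)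
          (convex_halfSpace_le hlin _))
        (isClosed_le (F m).continuous continuous_const)
    have hFf : F m f ≤ sSup ((F m) '' D) := hsub hf
    have h2 : F m (G m) = 0 := hann m hm (G m) (hGmem m)
    have h3 : F m f = ‖f - G m‖ := by
      have : F m f = F m (f - G m) + F m (G m) := by
        rw [← map_add]; congr 1; abel
      rw [this, (hFnorm m).2, h2, add_zero]
    linarith
  -- constants
  set K := (t / (2 * γ * q)) ^ (1 / (q - 1)) with hK
  have hK0 : 0 < K := Real.rpow_pos_of_pos (by positivity) _
  have hKq : K ^ (q - 1) = t / (2 * γ * q) := by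
    rw [hK, ← Real.rpow_mul (by positivity), one_div, inv_mul_cancel₀ hq1.ne', Real.rpow_one]
  -- main recurrence
  have hrec : ∀ m : ℕ, f - G m ≠ 0 →
      ‖f - G (m+1)‖ ≤ ‖f - G m‖ * (1 - (t * K / p) * ‖f - G m‖ ^ p) := by
    intro m hm
    have ha : 0 < ‖f - G m‖ := norm_pos_iff.2 hm
    set a := ‖f - G m‖ with hadef
    set l := K * a ^ p with hldef
    have hap : (0:ℝ) < a ^ p := Real.rpow_pos_of_pos ha _
    have hl0 : 0 < l := by positivity
    obtain ⟨hφD, hφF⟩ := hgreedy (m+1) (by omega)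
    simp only [Nat.add_sub_cancel] at hφF
    have hφmem : φ (m+1) ∈ Submodule.span ℝ (φ '' Set.Icc 1 (m+1)) :=
      Submodule.subset_span ⟨m+1, ⟨by omega, le_refl _⟩, rfl⟩
    have step1 : ‖f - G (m+1)‖ ≤ ‖(f - G m) - l • φ (m+1)‖ := by
      have hmem : G m + l • φ (m+1) ∈ Submodule.span ℝ (φ '' Set.Icc 1 (m+1)) :=
        add_mem (hspanmono m (hGmem m)) (Submodule.smul_mem _ _ hφmem)
      have h2 := hmin (m+1) _ hmem
      have heq : f - (G m + l • φ (m+1)) = (f - G m) - l • φ (m+1) := by abel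
      rwa [heq] at h2
    have pair := pair_ineq γ q hγ hq hrho (f - G m) (l • φ (m+1)) hm
    have hyn : ‖l • φ (m+1)‖ ≤ l := by
      rw [norm_smul, Real.norm_eq_abs, abs_of_pos hl0]
      exact mul_le_of_le_one_right hl0.le (hnormD _ hφD)
    have hEq : γ * (‖l • φ (m+1)‖ / a) ^ q ≤ γ * (l / a) ^ q := by
      apply mul_le_mul_of_nonneg_left _ hγ.le
      exact Real.rpow_le_rpow (by positivity) (by gcongr) hq0.le
    have hsupm := hsup m hm
    have hφt : t * a ≤ F m (φ (m+1)) :=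
      le_trans (mul_le_mul_of_nonneg_left hsupm ht0.le) hφF
    have step3 : a + l * (t * a) ≤ ‖(f - G m) + l • φ (m+1)‖ := by
      have h1 := hFle m ((f - G m) + l • φ (m+1))
      rw [map_add, map_smul, smul_eq_mul, (hFnorm m).2] at h1
      nlinarith [mul_le_mul_of_nonneg_left hφt hl0.le]
    have comb : ‖f - G (m+1)‖ ≤ a + 2 * a * γ * (l / a) ^ q - l * t * a := by
      have h5 := mul_le_mul_of_nonneg_left hEq (by positivity : (0:ℝ) ≤ 2 * a)
      nlinarith [step1, pair, step3]
    have halg : 2 * a * γ * (l / a) ^ q = l * t * a / q := by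
      have e1 : l / a = K * a ^ (p - 1) := by
        rw [hldef, mul_div_assoc]
        congr 1
        rw [Real.rpow_sub ha, Real.rpow_one]
      have e2 : (K * a ^ (p - 1)) ^ q = K ^ q * a ^ p := by
        rw [Real.mul_rpow hK0.le (by positivity), ← Real.rpow_mul ha.le, hpq]
      have e3 : K ^ q = K * (t / (2 * γ * q)) := by
        conv_lhs => rw [show q = 1 + (q - 1) by ring]
        rw [Real.rpow_add hK0, Real.rpow_one, hKq]
      rw [e1, e2, e3, hldef]
      field_simp
    have final : a + 2 * a * γ * (l / a) ^ q - l * t * a = a * (1 - (t * K / p) * a ^ p) := by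
      rw [halg, hldef, hp]
      field_simp
      ring
    linarith [comb, final.ge, final.le]
  -- key induction
  have hw0 : 0 < t * K / p := by positivity
  have hkey : ∀ m : ℕ, ‖f - G m‖ ^ p * (1 + (m:ℝ) * (t * K)) ≤ 1 := by
    intro m
    induction m with
    | zero =>
      simp only [hG0, sub_zero, Nat.cast_zero, zero_mul, add_zero, mul_one]
      exact Real.rpow_le_one (norm_nonneg f) hf1 hp0.le
    | succ n ih =>
      by_cases hn : f - G n = 0
      · have h0 : ‖f - G (n+1)‖ = 0 := by
          have := hmono n
          rw [hn, norm_zero] at this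
          linarith [norm_nonneg (f - G (n+1))]
        rw [h0, Real.zero_rpow hp0.ne', zero_mul]
        norm_num
      · have ha : 0 < ‖f - G n‖ := norm_pos_iff.2 hn
        set a := ‖f - G n‖ with hadef
        set w := t * K / p with hwdef
        set x := w * a ^ p with hxdef
        have hap : (0:ℝ) < a ^ p := Real.rpow_pos_of_pos ha _
        have hx0 : 0 ≤ x := by positivity
        have hrec' := hrec n hn
        have hx1 : x ≤ 1 := by
          nlinarith [norm_nonneg (f - G (n+1)), hrec', ha]
        have hstep : ‖f - G (n+1)‖ ^ p ≤ a ^ p * (1 - x) ^ p := by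
          calc ‖f - G (n+1)‖ ^ p ≤ (a * (1 - x)) ^ p :=
                Real.rpow_le_rpow (norm_nonneg _) hrec' hp0.le
          _ = a ^ p * (1 - x) ^ p := Real.mul_rpow ha.le (by linarith)
        have hbern := bern_aux hp1.le hx0 hx1
        have hpw : p * w = t * K := by
          rw [hwdef]; field_simp
        set y := a ^ p with hydef
        set B := (1 - x) ^ p with hBdef
        have hB0 : (0:ℝ) ≤ B := Real.rpow_nonneg (by linarith) p
        set S := 1 + (n:ℝ) * (t * K) with hSdef
        have hS1 : (1:ℝ) ≤ S := by
          rw [hSdef]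
          nlinarith [Nat.cast_nonneg (α := ℝ) n, mul_pos ht0 hK0]
        have h1 : y * B * (S + p * w) * (1 + p * x) ≤ (y * (S + p * w)) * 1 := by
          calc y * B * (S + p * w) * (1 + p * x) = (y * (S + p * w)) * (B * (1 + p * x)) := by
                ring
          _ ≤ (y * (S + p * w)) * 1 := by
                apply mul_le_mul_of_nonneg_left hbern
                have : (0:ℝ) ≤ S + p * w := by nlinarith [hw0]
                positivity
        have h2 : y * (S + p * w) ≤ 1 + p * x := by
          have hex : y * (S + p * w) = y * S + p * x := by rw [hxdef]; ring
          have hyS : y * S ≤ 1 := ih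
          nlinarith
        have h3 : y * B * (S + p * w) ≤ 1 := by
          have hpx : (0:ℝ) < 1 + p * x := by positivity
          have h4 : y * B * (S + p * w) * (1 + p * x) ≤ 1 * (1 + p * x) := by nlinarith
          exact le_of_mul_le_mul_right (by linarith) hpx
        calc ‖f - G (n+1)‖ ^ p * (1 + ((n:ℕ)+1 : ℕ) * (t * K))
            = ‖f - G (n+1)‖ ^ p * (S + p * w) := by
              rw [hpw, hSdef]; push_cast; ring
        _ ≤ (y * B) * (S + p * w) := by
              apply mul_le_mul_of_nonneg_right
              · rw [hydef, hBdef]; exact hstep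
              · nlinarith [hw0]
        _ ≤ 1 := h3
  -- conclusion
  intro m
  have hS0 : (0:ℝ) < 1 + (m:ℝ) * (t * K) := by positivity
  have hT0 : (0:ℝ) < 1 + (m:ℝ) * t ^ p := by
    have : (0:ℝ) < t ^ p := Real.rpow_pos_of_pos ht0 p
    positivity
  have h1 : ‖f - G m‖ ^ p ≤ (1 + (m:ℝ) * (t * K))⁻¹ := by
    rw [← one_div, le_div_iff₀ hS0]
    exact hkey m
  have h2 : ‖f - G m‖ ≤ (1 + (m:ℝ) * (t * K)) ^ (-(1/p)) := by
    have hq' := Real.rpow_le_rpow (Real.rpow_nonneg (norm_nonneg _) p) h1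
      (by positivity : (0:ℝ) ≤ 1/p)
    rw [one_div, Real.rpow_rpow_inv (norm_nonneg _) hp0.ne'] at hq'
    rw [Real.rpow_neg hS0.le, one_div, ← Real.inv_rpow hS0.le]
    exact hq'
  -- numeric comparison
  have hAp : A ^ p = 4 ^ p * (2 * γ) ^ (1 / (q - 1)) := by
    rw [hA, Real.mul_rpow (by norm_num) (Real.rpow_nonneg h2γ.le _),
      ← Real.rpow_mul h2γ.le]
    congr 2
    rw [hp]; field_simp
  have htK : t * K = t ^ p * (2 * γ * q) ^ (-(1 / (q - 1))) := by
    rw [hK, Real.div_rpow ht0.le (by positivity), div_eq_mul_inv,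
      ← Real.rpow_neg (by positivity)]
    have htt : t * t ^ (1 / (q - 1)) = t ^ p := by
      nth_rewrite 1 [← Real.rpow_one t]
      rw [← Real.rpow_add ht0]
      congr 1
      rw [hp]; field_simp; ring
    rw [← mul_assoc, htt]
  have h4p : q ^ (1 / (q - 1)) ≤ (4:ℝ) ^ p := by
    have hq4 : q ≤ (4:ℝ) ^ q := by
      have : (4:ℝ) ^ (1:ℝ) ≤ 4 ^ q :=
        Real.rpow_le_rpow_of_exponent_le (by norm_num) hq.le
      rw [Real.rpow_one] at this
      linarith
    have e : (4:ℝ) ^ p = ((4:ℝ) ^ q) ^ (1 / (q - 1)) := by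
      rw [← Real.rpow_mul (by norm_num : (0:ℝ) ≤ 4)]
      congr 1
      rw [hp]; field_simp
    rw [e]
    exact Real.rpow_le_rpow hq0.le hq4 (by positivity)
  have hmain : t ^ p ≤ A ^ p * (t * K) := by
    rw [hAp, htK]
    have hsplit : (2 * γ * q) ^ (-(1 / (q - 1))) =
        (2 * γ) ^ (-(1 / (q - 1))) * q ^ (-(1 / (q - 1))) := by
      rw [← Real.mul_rpow h2γ.le hq0.le]
    rw [hsplit]
    have hcancel : (2 * γ) ^ (1 / (q - 1)) * (2 * γ) ^ (-(1 / (q - 1))) = 1 := by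
      rw [← Real.rpow_add h2γ, add_neg_cancel, Real.rpow_zero]
    have hqc : (0:ℝ) < q ^ (1 / (q - 1)) := Real.rpow_pos_of_pos hq0 _
    have hone : (1:ℝ) ≤ 4 ^ p * q ^ (-(1 / (q - 1))) := by
      rw [Real.rpow_neg hq0.le]
      calc (1:ℝ) = q ^ (1 / (q - 1)) * (q ^ (1 / (q - 1)))⁻¹ :=
            (mul_inv_cancel₀ hqc.ne').symm
      _ ≤ 4 ^ p * (q ^ (1 / (q - 1)))⁻¹ :=
            mul_le_mul_of_nonneg_right h4p (inv_nonneg.2 hqc.le)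
    have hre : 4 ^ p * (2 * γ) ^ (1 / (q - 1)) *
        (t ^ p * ((2 * γ) ^ (-(1 / (q - 1))) * q ^ (-(1 / (q - 1))))) =
        t ^ p * (4 ^ p * q ^ (-(1 / (q - 1)))) *
        ((2 * γ) ^ (1 / (q - 1)) * (2 * γ) ^ (-(1 / (q - 1)))) := by ring
    rw [hre, hcancel, mul_one]
    have htp : (0:ℝ) < t ^ p := Real.rpow_pos_of_pos ht0 p
    exact le_mul_of_one_le_right htp.le hone
  have hA1p : (1:ℝ) ≤ A ^ p := by
    calc (1:ℝ) = 1 ^ p := (Real.one_rpow p).symm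
    _ ≤ A ^ p := Real.rpow_le_rpow zero_le_one hA1 hp0.le
  have hnum : 1 + (m:ℝ) * t ^ p ≤ A ^ p * (1 + (m:ℝ) * (t * K)) := by
    have hm0 : (0:ℝ) ≤ (m:ℝ) := Nat.cast_nonneg m
    linarith [mul_le_mul_of_nonneg_left hmain hm0, hA1p]
  have hS' : (0:ℝ) < (1 + (m:ℝ) * (t * K)) ^ (1/p) := Real.rpow_pos_of_pos hS0 _
  have hT' : (0:ℝ) < (1 + (m:ℝ) * t ^ p) ^ (1/p) := Real.rpow_pos_of_pos hT0 _
  have hup : (1 + (m:ℝ) * t ^ p) ^ (1/p) ≤ A * (1 + (m:ℝ) * (t * K)) ^ (1/p) := by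
    calc (1 + (m:ℝ) * t ^ p) ^ (1/p) ≤ (A ^ p * (1 + (m:ℝ) * (t * K))) ^ (1/p) :=
          Real.rpow_le_rpow hT0.le hnum (by positivity)
    _ = A * (1 + (m:ℝ) * (t * K)) ^ (1/p) := by
          rw [Real.mul_rpow (by positivity) hS0.le, one_div,
            Real.rpow_rpow_inv hA0.le hp0.ne']
  have hfinal : (1 + (m:ℝ) * (t * K)) ^ (-(1/p)) ≤ A * (1 + (m:ℝ) * t ^ p) ^ (-(1/p)) := by
    rw [Real.rpow_neg hS0.le, Real.rpow_neg hT0.le]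
    calc ((1 + (m:ℝ) * (t * K)) ^ (1/p))⁻¹
        = (1 + (m:ℝ) * t ^ p) ^ (1/p) * ((1 + (m:ℝ) * t ^ p) ^ (1/p))⁻¹ *
          ((1 + (m:ℝ) * (t * K)) ^ (1/p))⁻¹ := by
          rw [mul_inv_cancel₀ hT'.ne', one_mul]
    _ ≤ (A * (1 + (m:ℝ) * (t * K)) ^ (1/p)) * ((1 + (m:ℝ) * t ^ p) ^ (1/p))⁻¹ *
          ((1 + (m:ℝ) * (t * K)) ^ (1/p))⁻¹ := by
          apply mul_le_mul_of_nonneg_right (mul_le_mul_of_nonneg_right hup (by positivity))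
          positivity
    _ = A * ((1 + (m:ℝ) * t ^ p) ^ (1/p))⁻¹ *
          ((1 + (m:ℝ) * (t * K)) ^ (1/p) * ((1 + (m:ℝ) * (t * K)) ^ (1/p))⁻¹) := by ring
    _ = A * ((1 + (m:ℝ) * t ^ p) ^ (1/p))⁻¹ := by
          rw [mul_inv_cancel₀ hS'.ne', mul_one]
  exact le_trans h2 hfinal
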